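/- arXiv:2412.19453 — 5 statements merged into one kernel-verified Lean document; each statement's English description precedes it below -/
import Mathlib

section
/- For any constant c ≥ 1.66 and any x ∈ [0,1], the series ∑_{n=0}^∞ (x^{2n}/(2n)!) · γ(x/(2n+1)) is at most exp(c·x²), where γ(t) = 1 + t²/2 + t³/2 + 5t⁴/64 + t⁵/32 + t⁶/256. -/
/-! γ is increasing on `[0, ∞)`, and for `|t| ≤ 1` every power `t^k` with `k ≥ 2` is at most `t²`,
so `γ(x / (2n+1)) ≤ γ(x) ≤ 1 + (285/256) x² ≤ exp((285/256) x²)`, where `285/256` is the sum of the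
non-constant coefficients of γ. What is left is the series of `cosh x ≤ exp(x² / 2)`, and
`1/2 + 285/256 = 413/256 < 1.66`. -/

open Real Set

noncomputable def gammaPoly (t : ℝ) : ℝ :=
  1 + (1/2) * t^2 + (1/2) * t^3 + (5/64) * t^4 + (1/32) * t^5 + (1/256) * t^6

lemma gammaPoly_monotoneOn : MonotoneOn gammaPoly (Ici 0) := by
  intro s hs t ht hst
  simp only [mem_Ici] at hs ht
  unfold gammaPoly
  gcongr

lemma gammaPoly_le_one_add_sq {t : ℝ} (ht : |t| ≤ 1) :
    gammaPoly t ≤ 1 + (285/256) * t^2 := by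
  have ht2 : t^2 ≤ 1 := by nlinarith [abs_nonneg t, sq_abs t]
  have h3 : t^3 ≤ t^2 := by nlinarith [sq_nonneg t, (abs_le.mp ht).2]
  have h4 : t^4 ≤ t^2 := by nlinarith [sq_nonneg t]
  have h5 : t^5 ≤ t^2 := by nlinarith [sq_nonneg t]
  have h6 : t^6 ≤ t^2 := by nlinarith [sq_nonneg t, pow_two_nonneg (t^2)]
  unfold gammaPoly
  linarith

lemma tsum_cosh_terms_mul_le {f : ℝ → ℝ} (hf : MonotoneOn f (Ici 0)) (hf0 : 0 ≤ f 0)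
    {x : ℝ} (hx : 0 ≤ x) :
    ∑' n : ℕ, x ^ (2 * n) / (Nat.factorial (2 * n)) * f (x / (2 * n + 1)) ≤ cosh x * f x := by
  have hmem : ∀ n : ℕ, x / (2 * n + 1) ∈ Ici 0 := fun n => div_nonneg hx (by positivity)
  have hle : ∀ n : ℕ, x / (2 * n + 1) ≤ x := fun n =>
    div_le_self hx (by linarith [(Nat.cast_nonneg n : (0:ℝ) ≤ n)])
  have hterm : ∀ n : ℕ, x ^ (2 * n) / (Nat.factorial (2 * n)) * f (x / (2 * n + 1))
      ≤ x ^ (2 * n) / (Nat.factorial (2 * n)) * f x := fun n =>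
    mul_le_mul_of_nonneg_left (hf (hmem n) hx (hle n)) (by positivity)
  have hnonneg : ∀ n : ℕ, 0 ≤ x ^ (2 * n) / (Nat.factorial (2 * n)) * f (x / (2 * n + 1)) :=
    fun n => mul_nonneg (by positivity) (hf0.trans (hf self_mem_Ici (hmem n) (hmem n)))
  have hcosh := (hasSum_cosh x).mul_right (f x)
  calc _ ≤ ∑' n : ℕ, x ^ (2 * n) / (Nat.factorial (2 * n)) * f x :=
        (hcosh.summable.of_nonneg_of_le hnonneg hterm).tsum_le_tsum hterm hcosh.summable
    _ = cosh x * f x := hcosh.tsum_eq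

theorem series_gamma_le_exp (c : ℝ) (hc : 1.66 ≤ c) (x : ℝ) (hx : x ∈ Set.Icc (0:ℝ) 1) :
    (∑' n : ℕ, x ^ (2 * n) / (Nat.factorial (2 * n)) * gammaPoly (x / (2 * n + 1)))
      ≤ Real.exp (c * x ^ 2) := by
  obtain ⟨hx0, hx1⟩ := hx
  have hgamma_nonneg : 0 ≤ gammaPoly x := by unfold gammaPoly; positivity
  have hgamma : gammaPoly x ≤ exp ((285/256) * x^2) :=
    (gammaPoly_le_one_add_sq (abs_le.mpr ⟨by linarith, hx1⟩)).trans
      (by linarith [add_one_le_exp ((285/256) * x^2)])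
  calc _ ≤ cosh x * gammaPoly x :=
        tsum_cosh_terms_mul_le gammaPoly_monotoneOn (by norm_num [gammaPoly]) hx0
    _ ≤ exp (x^2 / 2) * exp ((285/256) * x^2) :=
        mul_le_mul (cosh_le_exp_half_sq x) hgamma hgamma_nonneg (exp_pos _).le
    _ = exp ((413/256) * x^2) := by rw [← exp_add]; ring_nf
    _ ≤ exp (c * x^2) := by gcongr; linarith
end

section
/- Let W be a linear operator with W W† W = W (a partial isometry) and p = 1/4. Suppose U is a unitary and Π, Π̃ are orthogonal projections with Π̃ U Π = √p · W. Then Π̃ · U(2Π − 1)U†(2Π̃ − 1)U · Π = −W. -/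
open Matrix

/-- Oblivious amplitude amplification for partial isometries with success amplitude `√p = 1/2`:
`Π̃ · U(2Π − 1)U†(2Π̃ − 1)U · Π = −W`. -/
theorem oaa_partial_isometry {d : ℕ} (U P Pt W : Matrix (Fin d) (Fin d) ℂ)
    (hU : Uᴴ * U = 1 ∧ U * Uᴴ = 1)
    (hP : P * P = P ∧ Pᴴ = P)
    (hPt : Pt * Pt = Pt ∧ Ptᴴ = Pt)
    (hW : W * Wᴴ * W = W)
    (hblock : Pt * U * P = (1/2 : ℂ) • W) :
    Pt * (U * ((2:ℂ) • P - 1) * Uᴴ * ((2:ℂ) • Pt - 1) * U) * P = -W := by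
  obtain ⟨hU1, hU2⟩ := hU
  obtain ⟨hP1, hP2⟩ := hP
  obtain ⟨hPt1, hPt2⟩ := hPt
  have hAH : P * Uᴴ * Pt = (1/2 : ℂ) • Wᴴ := by
    have := congrArg conjTranspose hblock
    simpa [conjTranspose_mul, hP2, hPt2, mul_assoc] using this
  -- key cubic term
  have hcube : Pt * U * P * Uᴴ * Pt * U * P = (1/8 : ℂ) • (W * Wᴴ * W) := by
    calc Pt * U * P * Uᴴ * Pt * U * P
        = (Pt * U * P) * ((P * Uᴴ * Pt) * (Pt * U * P)) := by
          rw [show (Pt * U * P) * ((P * Uᴴ * Pt) * (Pt * U * P)) =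
              Pt * U * (P * P) * Uᴴ * (Pt * Pt) * U * P by noncomm_ring, hP1, hPt1]
      _ = ((1/2:ℂ) • W) * (((1/2:ℂ) • Wᴴ) * ((1/2:ℂ) • W)) := by rw [hblock, hAH]
      _ = (1/8 : ℂ) • (W * Wᴴ * W) := by
          simp [smul_smul, mul_assoc]; norm_num
  have hmid : Pt * U * P * Uᴴ * U * P = (1/2 : ℂ) • W := by
    rw [mul_assoc (Pt * U * P), hU1, mul_one, mul_assoc, hP1, hblock]
  have hmid2 : Pt * U * Uᴴ * Pt * U * P = (1/2 : ℂ) • W := by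
    rw [mul_assoc Pt U, hU2, mul_one, hPt1, hblock]
  have hmid3 : Pt * U * Uᴴ * U * P = (1/2 : ℂ) • W := by
    rw [mul_assoc Pt U, hU2, mul_one, hblock]
  have expand : Pt * (U * ((2:ℂ) • P - 1) * Uᴴ * ((2:ℂ) • Pt - 1) * U) * P =
      (4:ℂ) • (Pt * U * P * Uᴴ * Pt * U * P) - (2:ℂ) • (Pt * U * P * Uᴴ * U * P)
        - (2:ℂ) • (Pt * U * Uᴴ * Pt * U * P) + (Pt * U * Uᴴ * U * P) := by
    simp only [smul_sub, sub_mul, mul_sub, smul_mul_assoc, mul_smul_comm, one_mul, mul_one,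
      smul_smul]
    noncomm_ring
    simp only [← Int.cast_smul_eq_zsmul ℂ, smul_smul]
    norm_num
    module
  rw [expand, hcube, hmid, hmid2, hmid3]
  rw [smul_smul]
  rw [hW]
  ext i j
  simp [Matrix.sub_apply, Matrix.add_apply, Matrix.smul_apply, Matrix.neg_apply]
  ring
end

section
/- Let U be a unitary, Π, Π̃ orthogonal projections, and W a (not necessarily partial-isometric) operator with Π̃ U Π = (1/2) W and W† W = Π(1 + δD̃) for a Hermitian operator D̃ commuting with Π and a real δ. Then Π̃ · U(1 − 2Π)U†(2Π̃ − 1)U · Π = W(1 − (δ/2)D̃). -/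
open Matrix

/-- One round of oblivious amplitude amplification applied to an approximate block-encoding
`Π̃ U Π = (1/2) W` with `W†W = Π(1 + δD̃)` yields `W(1 − (δ/2)D̃)` exactly. -/
theorem oaa_approximate_isometry {d : ℕ} (U P Pt W Dt : Matrix (Fin d) (Fin d) ℂ)
    (δ : ℝ) (hδ : 0 < δ)
    (hU : Uᴴ * U = 1 ∧ U * Uᴴ = 1)
    (hP : P * P = P ∧ Pᴴ = P)
    (hPt : Pt * Pt = Pt ∧ Ptᴴ = Pt)
    (hDt : Dtᴴ = Dt)
    (hcomm : P * Dt = Dt * P)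
    (hiso : Wᴴ * W = P * (1 + (δ : ℂ) • Dt))
    (hblock : Pt * U * P = (1/2 : ℂ) • W) :
    Pt * (U * (1 - (2:ℂ) • P) * Uᴴ * ((2:ℂ) • Pt - 1) * U) * P
      = W * (1 - ((δ/2 : ℝ) : ℂ) • Dt) := by
  obtain ⟨hU1, hU2⟩ := hU
  obtain ⟨hPi, hPh⟩ := hP
  obtain ⟨hPti, hPth⟩ := hPt
  have hWdef : W = (2:ℂ) • (Pt * U * P) := by rw [hblock, smul_smul]; norm_num
  have hWP : W * P = W := by
    conv_lhs => rw [hWdef, smul_mul_assoc, mul_assoc, hPi]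
    rw [← hWdef]
  have hPtW : Pt * W = W := by
    conv_lhs => rw [hWdef, mul_smul_comm, ← mul_assoc, ← mul_assoc, hPti]
    rw [← hWdef]
  have hWh : P * Uᴴ * Pt = (1/2:ℂ) • Wᴴ := by
    have h := congrArg conjTranspose hblock
    simpa [conjTranspose_mul, hPh, hPth, mul_assoc] using h
  -- right-assoc cancellation lemmas
  have hP2 : ∀ X : Matrix (Fin d) (Fin d) ℂ, P * (P * X) = P * X := fun X => by
    rw [← mul_assoc, hPi]
  have hPt2 : ∀ X : Matrix (Fin d) (Fin d) ℂ, Pt * (Pt * X) = Pt * X := fun X => by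
    rw [← mul_assoc, hPti]
  have hUc1 : ∀ X : Matrix (Fin d) (Fin d) ℂ, U * (Uᴴ * X) = X := fun X => by
    rw [← mul_assoc, hU2, one_mul]
  have hUc2 : ∀ X : Matrix (Fin d) (Fin d) ℂ, Uᴴ * (U * X) = X := fun X => by
    rw [← mul_assoc, hU1, one_mul]
  have hblock' : Pt * (U * P) = (1/2:ℂ) • W := by rw [← mul_assoc, hblock]
  have hblockX : ∀ X : Matrix (Fin d) (Fin d) ℂ,
      Pt * (U * (P * X)) = (1/2:ℂ) • (W * X) := fun X => by
    rw [← mul_assoc, ← mul_assoc, hblock, smul_mul_assoc]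
  have hWUW : W * (Uᴴ * W) = (1/2:ℂ) • (W * (P * (1 + (δ:ℂ) • Dt))) := by
    calc W * (Uᴴ * W) = W * P * (Uᴴ * (Pt * W)) := by rw [hWP, hPtW]
      _ = W * ((P * Uᴴ * Pt) * W) := by
          simp only [mul_assoc]
      _ = (1/2:ℂ) • (W * (Wᴴ * W)) := by rw [hWh, smul_mul_assoc, mul_smul_comm]
      _ = (1/2:ℂ) • (W * (P * (1 + (δ:ℂ) • Dt))) := by rw [hiso]
  simp only [mul_sub, sub_mul, mul_one, one_mul, smul_mul_assoc, mul_smul_comm,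
    mul_assoc, smul_smul]
  simp only [hUc1, hUc2, hP2, hPt2, hU1, hU2, mul_one, hblock', hblockX, smul_smul,
    mul_smul_comm, smul_sub, sub_smul]
  simp only [hWUW, smul_smul, hWP, ← mul_assoc, mul_add, mul_one, mul_smul_comm]
  rw [hPtW]
  push_cast
  module
end

section
/- Let {B_k}_{k=1}^K be operators on a finite-dimensional Hilbert space with ∑_k B_k† B_k = 1 + δD where δ > 0, D is Hermitian, and ‖1 + δD‖_∞ ≤ 4. Define B_k' := B_k(1 − (δ/2)D). Then ∑_k (B_k')† B_k' ≤ 1, i.e., the map ∑_k B_k' • (B_k')† is completely positive and trace non-increasing. -/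
open Matrix
open scoped ComplexOrder

/-!
Write `C = 1 - (δ/2) D`. Pulling `C` out of the Kraus sum gives
`∑ₖ (Bₖ C)† (Bₖ C) = C (1 + δD) C`, and since `C` is a polynomial in `D`, a direct expansion shows
`1 - C (1 + δD) C = (δ/2)² · D (4 - (1 + δD)) D`.
The middle factor is positive semidefinite because the Hermitian operator `1 + δD` has norm at
most `4`; conjugating by `D` and scaling by `(δ/2)² ≥ 0` keep it so.
-/

/-- The `ℓ²` operator norm of a matrix. -/
noncomputable def opNorm {d : ℕ} (A : Matrix (Fin d) (Fin d) ℂ) : ℝ :=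
  ‖Matrix.toEuclideanCLM (𝕜 := ℂ) A‖

theorem Matrix.sum_conjTranspose_mul_mul_self {ι m n α : Type*} [Fintype m] [Fintype n]
    [CommSemiring α] [StarRing α] (s : Finset ι) (B : ι → Matrix m n α) (C : Matrix n n α) :
    ∑ i ∈ s, (B i * C)ᴴ * (B i * C) = Cᴴ * (∑ i ∈ s, (B i)ᴴ * B i) * C := by
  simp only [conjTranspose_mul, Finset.sum_mul, Finset.mul_sum, Matrix.mul_assoc]

theorem one_sub_mul_mul_eq_smul {R : Type*} [Ring R] [Algebra ℝ R] (t : ℝ) (D : R) :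
    1 - (1 - t • D) * (1 + (2 * t) • D) * (1 - t • D) =
      t ^ 2 • (D * ((4 : ℝ) • 1 - (1 + (2 * t) • D)) * D) := by
  simp only [mul_sub, sub_mul, mul_add, add_mul, smul_mul_assoc, mul_smul_comm, smul_smul,
    mul_one, one_mul, smul_sub, smul_add, mul_assoc]
  module

theorem Matrix.IsHermitian.posSemidef_smul_one_sub {n : Type*} [Fintype n] [DecidableEq n]
    {A : Matrix n n ℂ} (hA : A.IsHermitian) {c : ℝ}
    (hc : ‖toEuclideanCLM (𝕜 := ℂ) A‖ ≤ c) : (c • 1 - A).PosSemidef := by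
  have hT : IsSelfAdjoint (toEuclideanCLM (𝕜 := ℂ) A) := by
    rw [IsSelfAdjoint, ← map_star, hA.star_eq]
  have hle : toEuclideanCLM (𝕜 := ℂ) A ≤ algebraMap ℝ _ c :=
    hT.le_algebraMap_norm_self.trans (algebraMap_mono _ hc)
  have hmap : toEuclideanCLM (𝕜 := ℂ) (c • 1 - A) =
      algebraMap ℝ _ c - toEuclideanCLM (𝕜 := ℂ) A := by
    rw [map_sub, ← Complex.coe_smul, map_smul, map_one, Algebra.algebraMap_eq_smul_one]
    rfl
  rw [← sub_nonneg, ContinuousLinearMap.nonneg_iff_isPositive, ← hmap] at hle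
  rwa [← isPositive_toEuclideanLin_iff, ← coe_toEuclideanCLM_eq_toEuclideanLin]

theorem corrected_kraus_trace_nonincreasing_general {d K : ℕ}
    (B : Fin K → Matrix (Fin d) (Fin d) ℂ) (D : Matrix (Fin d) (Fin d) ℂ)
    (δ : ℝ) (hD : Dᴴ = D)
    (hsum : ∑ k, (B k)ᴴ * B k = 1 + (δ : ℂ) • D)
    (hnorm : opNorm (1 + (δ : ℂ) • D) ≤ 4) :
    ((1 : Matrix (Fin d) (Fin d) ℂ)
      - ∑ k, (B k * (1 - ((δ/2 : ℝ) : ℂ) • D))ᴴ * (B k * (1 - ((δ/2 : ℝ) : ℂ) • D))).PosSemidef := by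
  have hDH : D.IsHermitian := hD
  simp only [opNorm, Complex.coe_smul] at hsum hnorm ⊢
  rw [show δ = 2 * (δ / 2) by ring] at hsum hnorm
  have hCH : (1 - (δ / 2) • D).IsHermitian := isHermitian_one.sub (hDH.smul (.all _))
  have hmiddle : (D * ((4 : ℝ) • 1 - (1 + (2 * (δ / 2)) • D)) * D).PosSemidef := by
    have hHerm : (1 + (2 * (δ / 2)) • D).IsHermitian := isHermitian_one.add (hDH.smul (.all _))
    simpa only [hD] using (hHerm.posSemidef_smul_one_sub hnorm).conjTranspose_mul_mul_same D
  rw [sum_conjTranspose_mul_mul_self, hCH.eq, hsum, one_sub_mul_mul_eq_smul]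
  exact hmiddle.smul (sq_nonneg _)

/-- If `∑ₖ Bₖ†Bₖ = 1 + δD` with `D` Hermitian, `δ > 0`, and `‖1 + δD‖_∞ ≤ 4`, then the
corrected Kraus operators `Bₖ' = Bₖ(1 − (δ/2)D)` satisfy `∑ₖ Bₖ'†Bₖ' ≤ 1`, i.e. the map
`∑ₖ Bₖ' • Bₖ'†` is trace non-increasing. -/
theorem corrected_kraus_trace_nonincreasing {d K : ℕ}
    (B : Fin K → Matrix (Fin d) (Fin d) ℂ) (D : Matrix (Fin d) (Fin d) ℂ)
    (δ : ℝ) (hδ : 0 < δ) (hD : Dᴴ = D)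
    (hsum : ∑ k, (B k)ᴴ * B k = 1 + (δ : ℂ) • D)
    (hnorm : opNorm (1 + (δ : ℂ) • D) ≤ 4) :
    ((1 : Matrix (Fin d) (Fin d) ℂ)
      - ∑ k, (B k * (1 - ((δ/2 : ℝ) : ℂ) • D))ᴴ * (B k * (1 - ((δ/2 : ℝ) : ℂ) • D))).PosSemidef :=
  corrected_kraus_trace_nonincreasing_general B D δ hD hsum hnorm
end

section
/- Let Q = ⌈2κ/ln κ⌉ where κ = ln(r/Δ) and Δ ∈ (0, 1/e), r ≥ 1 (so κ > 1). Then 1/Q! < Δ/r, i.e., ln(1/Q!) < −κ. -/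
/-- Strict bound: for `x > 0` and `n ≥ 1`, `x ^ n / n! < exp x`. -/
lemma pow_div_factorial_lt_exp {x : ℝ} (hx : 0 < x) {n : ℕ} (hn : 1 ≤ n) :
    x ^ n / n.factorial < Real.exp x := by
  have h0n : (0 : ℕ) ≠ n := by omega
  have hsub : ({0, n} : Finset ℕ) ⊆ Finset.range (n + 1) := by
    intro i hi
    simp only [Finset.mem_insert, Finset.mem_singleton] at hi
    rcases hi with h | h <;> simp [h] <;> omega
  have h1 : (1 : ℝ) + x ^ n / n.factorial ≤
      ∑ i ∈ Finset.range (n + 1), x ^ i / i.factorial := by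
    have h := Finset.sum_le_sum_of_subset_of_nonneg (f := fun i => x ^ i / (i.factorial : ℝ))
      hsub (fun i _ _ => by positivity)
    rwa [Finset.sum_pair h0n, pow_zero, Nat.factorial_zero, Nat.cast_one, div_one] at h
  have h2 := Real.sum_le_exp_of_nonneg hx.le (n + 1)
  linarith

/-- With `κ = ln(r/Δ)`, `Δ ∈ (0, 1/e)`, `r ≥ 1`, and `Q = ⌈2κ/ln κ⌉`, one has `1/Q! < Δ/r`. -/
theorem factorial_truncation_bound (r : ℕ) (hr : 1 ≤ r) (Δ : ℝ)
    (hΔ0 : 0 < Δ) (hΔ : Δ < 1 / Real.exp 1) :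
    (1 : ℝ) / Nat.factorial ⌈2 * Real.log (r / Δ) / Real.log (Real.log (r / Δ))⌉₊ < Δ / r := by
  have hr1 : (1 : ℝ) ≤ (r : ℝ) := by exact_mod_cast hr
  have hr0 : (0 : ℝ) < (r : ℝ) := by linarith
  set x : ℝ := (r : ℝ) / Δ with hxdef
  have hx_pos : 0 < x := by positivity
  have hex : Real.exp 1 < x := by
    have h1 : Real.exp 1 < 1 / Δ := by
      rw [lt_div_iff₀ hΔ0]
      have := (lt_div_iff₀ (Real.exp_pos 1)).mp hΔ
      linarith [this]
    have h2 : 1 / Δ ≤ x := by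
      rw [hxdef, div_le_div_iff₀ hΔ0 hΔ0]
      nlinarith
    linarith
  set κ : ℝ := Real.log x with hκdef
  have hκ1 : 1 < κ := by
    have := Real.log_lt_log (Real.exp_pos 1) hex
    rwa [Real.log_exp] at this
  have hκ0 : 0 < κ := by linarith
  set L : ℝ := Real.log κ with hLdef
  have hL0 : 0 < L := Real.log_pos hκ1
  set q : ℝ := 2 * κ / L with hqdef
  have hq0 : 0 < q := by positivity
  set Q : ℕ := ⌈q⌉₊ with hQdef
  have hqQ : q ≤ (Q : ℝ) := Nat.le_ceil q
  have hQ1 : 1 ≤ Q := Nat.one_le_iff_ne_zero.mpr (by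
    have := Nat.ceil_pos.mpr hq0
    omega)
  have hQ0 : (0 : ℝ) < (Q : ℝ) := by exact_mod_cast Nat.lt_of_lt_of_le Nat.zero_lt_one hQ1
  -- √κ and the inequality e√κ ≤ q
  set t : ℝ := Real.sqrt κ with htdef
  have ht0 : 0 < t := Real.sqrt_pos.mpr hκ0
  have ht2 : t ^ 2 = κ := Real.sq_sqrt hκ0.le
  have hlogt : Real.log t = L / 2 := by
    rw [htdef, Real.log_sqrt hκ0.le, hLdef]
  have hlt : Real.log t ≤ t / Real.exp 1 := by
    have h := Real.log_le_sub_one_of_pos (show 0 < t / Real.exp 1 by positivity)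
    rw [Real.log_div ht0.ne' (Real.exp_ne_zero 1), Real.log_exp] at h
    linarith
  have hsq : Real.exp 1 * t ≤ q := by
    rw [hqdef, le_div_iff₀ hL0]
    have he0 : 0 < Real.exp 1 := Real.exp_pos 1
    have : Real.exp 1 * t * L = 2 * (Real.exp 1 * t * Real.log t) := by
      rw [hlogt]; ring
    rw [this]
    have h1 : Real.exp 1 * t * Real.log t ≤ Real.exp 1 * t * (t / Real.exp 1) := by
      have := mul_le_mul_of_nonneg_left hlt (by positivity : (0:ℝ) ≤ Real.exp 1 * t)
      linarith
    have h2 : Real.exp 1 * t * (t / Real.exp 1) = t ^ 2 := by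
      field_simp
    rw [h2, ht2] at h1
    linarith
  have hlogQ : 1 + L / 2 ≤ Real.log Q := by
    have h1 : Real.exp 1 * t ≤ (Q : ℝ) := le_trans hsq hqQ
    have h2 := Real.log_le_log (by positivity) h1
    rwa [Real.log_mul (Real.exp_ne_zero 1) ht0.ne', Real.log_exp, hlogt] at h2
  have hkey : κ ≤ (Q : ℝ) * Real.log Q - Q := by
    have h1 : (Q : ℝ) * (L / 2) ≤ (Q : ℝ) * (Real.log Q - 1) := by
      apply mul_le_mul_of_nonneg_left _ hQ0.le
      linarith
    have h2 : q * (L / 2) ≤ (Q : ℝ) * (L / 2) := by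
      apply mul_le_mul_of_nonneg_right hqQ (by positivity)
    have h3 : q * (L / 2) = κ := by
      rw [hqdef]; field_simp
    nlinarith
  -- Stirling-type strict bound
  have hfact : Real.exp ((Q : ℝ) * Real.log Q - Q) < (Q.factorial : ℝ) := by
    have h := pow_div_factorial_lt_exp hQ0 hQ1
    have hexp : Real.exp ((Q : ℝ) * Real.log Q) = (Q : ℝ) ^ Q := by
      rw [← Real.log_pow, Real.exp_log (by positivity)]
    have hfpos : (0 : ℝ) < (Q.factorial : ℝ) := by exact_mod_cast Q.factorial_pos
    rw [div_lt_iff₀ hfpos] at h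
    rw [Real.exp_sub, hexp, div_lt_iff₀ (Real.exp_pos _)]
    linarith [h]
  have hxQ : x < (Q.factorial : ℝ) := by
    have h1 : x = Real.exp κ := by rw [hκdef, Real.exp_log hx_pos]
    have h2 : Real.exp κ ≤ Real.exp ((Q : ℝ) * Real.log Q - Q) := Real.exp_le_exp.mpr hkey
    linarith
  have hfpos : (0 : ℝ) < (Q.factorial : ℝ) := by exact_mod_cast Q.factorial_pos
  rw [div_lt_div_iff₀ hfpos hr0]
  rw [hxdef, div_lt_iff₀ hΔ0] at hxQ
  nlinarith
end
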